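/- Let n ≥ 1 and a, b : ℤ/nℤ → ℂ. Then a and b are homometric (|F_a(l)| = |F_b(l)| for every l ∈ ℤ/nℤ) if and only if there exists u : ℤ/nℤ → ℂ such that the circulant matrix U = M(u) is unitary (U·Ūᵀ = I) and b = u ⋆ a, where ⋆ denotes cyclic convolution, (u ⋆ a)(t) = ∑_{k ∈ ℤ/nℤ} u(k)·a(t−k). -/

import Mathlib

/-!
The discrete Fourier transform turns cyclic convolution into pointwise multiplication. Since
`M(u) M(u)ᴴ = M(u ⋆ ũ)` with `ũ(t) = conj (u (-t))`, whose transform is `|F_u|²`, the circulant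
`M(u)` is unitary exactly when `|F_u| ≡ 1`. Hence `b = u ⋆ a` with `M(u)` unitary forces
`|F_b| = |F_a|`; conversely, if `|F_a| = |F_b|`, a unimodular `c` with `c · F_a = F_b` exists
pointwise (`c = F_b / F_a`, or `1` where `F_a` vanishes), and `u` is its inverse transform.
-/

open Matrix

/-- The Fourier coefficient of `a : ZMod n → ℂ` at `l`:
`F_a(l) = ∑_{t} a(t) · exp(2πi·l·t/n)`. -/
noncomputable def zmodFourier (n : ℕ) [NeZero n] (a : ZMod n → ℂ) (l : ZMod n) : ℂ :=
  ∑ t : ZMod n, a t * Complex.exp (2 * Real.pi * Complex.I * ((l.val : ℂ) * (t.val : ℂ)) / n)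

open Finset ZMod

section CyclicConv

variable {G R : Type*} [Fintype G] [AddCommGroup G] [NonUnitalNonAssocSemiring R]

def cyclicConv (u a : G → R) (t : G) : R := ∑ k, u k * a (t - k)

theorem circulant_mulVec_eq_cyclicConv (v w : G → R) : circulant v *ᵥ w = cyclicConv v w := by
  ext t
  simp only [mulVec, dotProduct, circulant_apply, cyclicConv]
  exact Fintype.sum_equiv (Equiv.subLeft t) _ _ fun j => by rw [Equiv.subLeft_apply, sub_sub_cancel]

theorem circulant_mul_circulant (v w : G → R) :
    circulant v * circulant w = circulant (cyclicConv v w) := by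
  rw [circulant_mul, circulant_mulVec_eq_cyclicConv]

end CyclicConv

namespace ZMod

variable {N : ℕ} [NeZero N]

theorem dft_cyclicConv (u a : ZMod N → ℂ) : 𝓕 (cyclicConv u a) = 𝓕 u * 𝓕 a := by
  ext k
  simp only [dft_apply, cyclicConv, Pi.mul_apply, smul_eq_mul]
  rw [sum_mul_sum]
  simp only [mul_sum]
  rw [sum_comm]
  refine sum_congr rfl fun j _ => ?_
  refine Fintype.sum_equiv (Equiv.subRight j) _ _ fun t => ?_
  rw [Equiv.subRight_apply, show -(t * k) = -(j * k) + -((t - j) * k) by ring,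
    AddChar.map_add_eq_mul]
  ring

theorem dft_single_zero : 𝓕 (Pi.single 0 1 : ZMod N → ℂ) = 1 := by
  ext k
  simp [dft_apply, Pi.single_apply]

theorem dft_star_comp_neg (u : ZMod N → ℂ) : 𝓕 (star fun j => u (-j)) = star (𝓕 u) := by
  ext k
  simp only [dft_apply, Pi.star_apply, star_sum, smul_eq_mul, star_mul']
  refine Fintype.sum_equiv (Equiv.neg _) _ _ fun j => ?_
  simp [← AddChar.map_neg_eq_conj]

theorem circulant_mul_conjTranspose_eq_one_iff (u : ZMod N → ℂ) :
    circulant u * (circulant u)ᴴ = 1 ↔ ∀ k, ‖𝓕 u k‖ = 1 := by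
  rw [conjTranspose_circulant, circulant_mul_circulant, ← circulant_single_one, circulant_inj,
    ← dft.injective.eq_iff, dft_cyclicConv, dft_star_comp_neg, dft_single_zero, funext_iff]
  refine forall_congr' fun k => ?_
  rw [Pi.mul_apply, Pi.star_apply, Pi.one_apply, Complex.star_def, Complex.mul_conj',
    ← Complex.ofReal_pow, Complex.ofReal_eq_one,
    pow_eq_one_iff_of_nonneg (norm_nonneg _) two_ne_zero]

end ZMod

theorem zmodFourier_eq_dft_neg (n : ℕ) [NeZero n] (a : ZMod n → ℂ) (l : ZMod n) :
    zmodFourier n a l = 𝓕 a (-l) := by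
  refine sum_congr rfl fun t _ => ?_
  have hprod : ((l.val * t.val : ℕ) : ZMod n) = t * l := by
    rw [Nat.cast_mul, natCast_zmod_val, natCast_zmod_val, mul_comm]
  rw [mul_neg, neg_neg, smul_eq_mul, mul_comm (stdAddChar _), stdAddChar_apply, ← hprod,
    toCircle_natCast]
  push_cast
  rfl

theorem exists_norm_eq_one_mul_eq {𝕜 : Type*} [NormedDivisionRing 𝕜] {z w : 𝕜} (h : ‖z‖ = ‖w‖) :
    ∃ c : 𝕜, ‖c‖ = 1 ∧ c * z = w := by
  rcases eq_or_ne z 0 with rfl | hz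
  · exact ⟨1, norm_one, by rw [norm_zero, eq_comm, norm_eq_zero] at h; simp [h]⟩
  · exact ⟨w / z, by rw [norm_div, ← h, div_self (norm_ne_zero_iff.2 hz)], div_mul_cancel₀ w hz⟩

theorem norm_zmodFourier_eq_iff_norm_dft_eq (n : ℕ) [NeZero n] (a b : ZMod n → ℂ) :
    (∀ l, ‖zmodFourier n a l‖ = ‖zmodFourier n b l‖) ↔ ∀ k, ‖𝓕 a k‖ = ‖𝓕 b k‖ := by
  simp only [zmodFourier_eq_dft_neg]
  exact ⟨fun h k => by simpa using h (-k), fun h l => h (-l)⟩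

theorem homometric_iff_exists_unitary_circulant_general
    (n : ℕ) [NeZero n] (a b : ZMod n → ℂ) :
    (∀ l : ZMod n, ‖zmodFourier n a l‖ = ‖zmodFourier n b l‖) ↔
      ∃ u : ZMod n → ℂ,
        Matrix.circulant u * (Matrix.circulant u)ᴴ = 1 ∧
        ∀ t : ZMod n, b t = ∑ k : ZMod n, u k * a (t - k) := by
  rw [norm_zmodFourier_eq_iff_norm_dft_eq]
  constructor
  · intro h
    choose c hc_norm hc_mul using fun k => exists_norm_eq_one_mul_eq (h k)
    refine ⟨𝓕⁻ c, (circulant_mul_conjTranspose_eq_one_iff _).2 ?_, fun t => ?_⟩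
    · simpa only [LinearEquiv.apply_symm_apply] using hc_norm
    · have hb : 𝓕 b = 𝓕 (cyclicConv (𝓕⁻ c) a) := by
        rw [dft_cyclicConv, LinearEquiv.apply_symm_apply]
        exact funext fun k => (hc_mul k).symm
      exact congrFun (dft.injective hb) t
  · rintro ⟨u, hu, hb⟩ k
    rw [show b = cyclicConv u a from funext hb, dft_cyclicConv, Pi.mul_apply, norm_mul,
      (circulant_mul_conjTranspose_eq_one_iff u).1 hu k, one_mul]

/-- `a` and `b` are homometric (their Fourier coefficients have equal magnitudes) iff there
exists `u` whose circulant matrix `U = M(u)` is unitary and `b = u ⋆ a` (cyclic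
convolution). -/
theorem homometric_iff_exists_unitary_circulant
    (n : ℕ) [NeZero n] (hn : 0 < n) (a b : ZMod n → ℂ) :
    (∀ l : ZMod n, ‖zmodFourier n a l‖ = ‖zmodFourier n b l‖) ↔
      ∃ u : ZMod n → ℂ,
        Matrix.circulant u * (Matrix.circulant u)ᴴ = 1 ∧
        ∀ t : ZMod n, b t = ∑ k : ZMod n, u k * a (t - k) :=
  homometric_iff_exists_unitary_circulant_general n a b
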